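/- arXiv:quant-ph/0101030 — 2 statements merged into one kernel-verified Lean document; each statement's English description precedes it below -/
import Mathlib

section
/- Let A and B be unital C*-algebras over ℂ and let ω be a state on the (algebraic) tensor product star algebra A ⊗ B, i.e., a linear functional with ω(1 ⊗ 1) = 1 and ω(x* x) ≥ 0 for all x ∈ A ⊗ B. If the restricted state (rω)(a) = ω(a ⊗ 1) is a pure state of A, i.e., an extreme point of the convex set of states of A, then ω is a product state: ω(a ⊗ b) = ω(a ⊗ 1) · ω(1 ⊗ b) for all a ∈ A and b ∈ B. -/
lemma state_aux0 (r₀ : ℝ) (w : ℂ) (h : ∀ s : ℝ, ∃ r : ℝ, 0 ≤ r ∧ (r₀ : ℂ) + s * w = r) : w = 0 := by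
  have him : w.im = 0 := by
    obtain ⟨r, hr, he⟩ := h 1
    have := congrArg Complex.im he
    simpa using this
  have hre : w.re = 0 := by
    by_contra hw
    obtain ⟨r, hr, he⟩ := h (-(r₀ + 1) / w.re)
    have h2 := congrArg Complex.re he
    simp [Complex.add_re, Complex.mul_re, him] at h2
    rw [div_mul_cancel₀ _ hw] at h2
    linarith
  exact Complex.ext hre him

lemma state_aux1 (r₀ : ℝ) (p q : ℂ)
    (h : ∀ t : ℂ, ∃ r : ℝ, 0 ≤ r ∧ (r₀ : ℂ) + t * p + (starRingEnd ℂ) t * q = r) : p = 0 := by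
  have hpq : p + q = 0 := by
    apply state_aux0 r₀
    intro s
    obtain ⟨r, hr, he⟩ := h s
    exact ⟨r, hr, by rw [← he, Complex.conj_ofReal]; ring⟩
  have hpq2 : Complex.I * (p - q) = 0 := by
    apply state_aux0 r₀
    intro s
    obtain ⟨r, hr, he⟩ := h (s * Complex.I)
    refine ⟨r, hr, ?_⟩
    rw [← he, map_mul, Complex.conj_ofReal, Complex.conj_I]
    ring
  have hd : p - q = 0 := by
    rcases mul_eq_zero.mp hpq2 with h' | h'
    · exact absurd h' Complex.I_ne_zero
    · exact h'
  linear_combination (hpq + hd) / 2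


open scoped TensorProduct

/-- Let `A`, `B` be unital C*-algebras and `ω` a state on the algebraic
tensor product `A ⊗ B` (a linear functional with `ω 1 = 1`, taking nonnegative real
values on elements `x* x`; positivity is expressed on arbitrary finite sums of simple
tensors, i.e. on arbitrary elements of `A ⊗ B`).  If the restricted state
`(rω)(a) = ω (a ⊗ 1)` is a pure state of `A`, i.e. an extreme point of the convex set of
states of `A`, then `ω` is a product state: `ω (a ⊗ b) = ω (a ⊗ 1) * ω (1 ⊗ b)`. -/
theorem pure_restriction_implies_product_state
    {A B : Type*}
    [NormedRing A] [StarRing A] [CStarRing A] [NormedAlgebra ℂ A] [StarModule ℂ A]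
    [CompleteSpace A]
    [NormedRing B] [StarRing B] [CStarRing B] [NormedAlgebra ℂ B] [StarModule ℂ B]
    [CompleteSpace B]
    (ω : A ⊗[ℂ] B →ₗ[ℂ] ℂ)
    (hunit : ω 1 = 1)
    (hpos : ∀ (n : ℕ) (u : Fin n → A) (v : Fin n → B), ∃ r : ℝ, 0 ≤ r ∧
      ω (∑ i, ∑ j, (star (u i) * u j) ⊗ₜ[ℂ] (star (v i) * v j)) = r)
    (hpure : (ω.comp ((TensorProduct.mk ℂ A B).flip 1)) ∈ Set.extremePoints ℝ
      {φ : A →ₗ[ℂ] ℂ | φ 1 = 1 ∧ ∀ a : A, ∃ r : ℝ, 0 ≤ r ∧ φ (star a * a) = r}) :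
    ∀ (a : A) (b : B), ω (a ⊗ₜ[ℂ] b) = ω (a ⊗ₜ[ℂ] 1) * ω (1 ⊗ₜ[ℂ] b) := by
  have pos1 : ∀ (x : A) (y : B), ∃ r : ℝ, 0 ≤ r ∧ ω ((star x * x) ⊗ₜ[ℂ] (star y * y)) = r := by
    intro x y
    obtain ⟨r, hr, he⟩ := hpos 1 ![x] ![y]
    refine ⟨r, hr, ?_⟩
    simpa [Fin.sum_univ_one] using he
  have deg : ∀ (u₁ u₂ : A) (v₁ v₂ : B), ω ((star u₂ * u₂) ⊗ₜ[ℂ] (star v₂ * v₂)) = 0 →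
      ω ((star u₁ * u₂) ⊗ₜ[ℂ] (star v₁ * v₂)) = 0 := by
    intro u₁ u₂ v₁ v₂ hz
    obtain ⟨r₀, hr₀, he₀⟩ := pos1 u₁ v₁
    apply state_aux1 r₀ _ (ω ((star u₂ * u₁) ⊗ₜ[ℂ] (star v₂ * v₁)))
    intro t
    obtain ⟨r, hr, he⟩ := hpos 2 ![u₁, t • u₂] ![v₁, v₂]
    refine ⟨r, hr, ?_⟩
    rw [← he]
    have expand : (∑ i : Fin 2, ∑ j : Fin 2,
        (star (![u₁, t • u₂] i) * ![u₁, t • u₂] j) ⊗ₜ[ℂ] (star (![v₁, v₂] i) * ![v₁, v₂] j)) =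
        (star u₁ * u₁) ⊗ₜ[ℂ] (star v₁ * v₁)
        + t • ((star u₁ * u₂) ⊗ₜ[ℂ] (star v₁ * v₂))
        + (starRingEnd ℂ t) • ((star u₂ * u₁) ⊗ₜ[ℂ] (star v₂ * v₁))
        + t • (starRingEnd ℂ t) • ((star u₂ * u₂) ⊗ₜ[ℂ] (star v₂ * v₂)) := by
      simp only [Fin.sum_univ_two, Matrix.cons_val_zero, Matrix.cons_val_one, Matrix.head_cons,
        star_smul, TensorProduct.smul_tmul', smul_mul_assoc, mul_smul_comm,
        TensorProduct.tmul_smul, mul_smul, starRingEnd_apply]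
      abel
    rw [expand]
    simp only [map_add, map_smul, smul_eq_mul, hz, he₀]
    ring
  have key : ∀ (a : A) (c d : B), star c * c + star d * d = 1 →
      ω (a ⊗ₜ[ℂ] (star c * c)) = ω (a ⊗ₜ[ℂ] (1:B)) * ω ((1:A) ⊗ₜ[ℂ] (star c * c)) := by
    have pos1' : ∀ y : B, ∃ r : ℝ, 0 ≤ r ∧ ω ((1:A) ⊗ₜ[ℂ] (star y * y)) = r := by
      intro y; obtain ⟨r, hr, he⟩ := pos1 1 y; exact ⟨r, hr, by simpa using he⟩
    intro a c d hcd
    obtain ⟨lam, hlam0, hlam⟩ := pos1' c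
    obtain ⟨mu, hmu0, hmu⟩ := pos1' d
    have hsumC : (lam : ℂ) + (mu : ℂ) = 1 := by
      rw [← hlam, ← hmu, ← map_add, ← TensorProduct.tmul_add, hcd,
        ← Algebra.TensorProduct.one_def, hunit]
    have hsum : lam + mu = 1 := by exact_mod_cast hsumC
    rcases eq_or_lt_of_le hlam0 with h0 | hlampos
    · -- lam = 0
      have hz : ω ((star (1:A) * (1:A)) ⊗ₜ[ℂ] (star c * c)) = 0 := by
        rw [star_one, one_mul, hlam, ← h0]; norm_num
      have hzero := deg (star a) 1 c c hz
      rw [star_star, mul_one] at hzero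
      rw [hzero, hlam, ← h0]; norm_num
    · rcases eq_or_lt_of_le hmu0 with h0' | hmupos
      · -- mu = 0
        have hz : ω ((star (1:A) * (1:A)) ⊗ₜ[ℂ] (star d * d)) = 0 := by
          rw [star_one, one_mul, hmu, ← h0']; norm_num
        have had := deg (star a) 1 d d hz
        rw [star_star, mul_one] at had
        have hsplit : ω (a ⊗ₜ[ℂ] (star c * c)) + ω (a ⊗ₜ[ℂ] (star d * d)) = ω (a ⊗ₜ[ℂ] (1:B)) := by
          rw [← map_add, ← TensorProduct.tmul_add, hcd]
        have hlam1 : lam = 1 := by linarith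
        rw [had, add_zero] at hsplit
        rw [hsplit, hlam, hlam1]; norm_num
      · -- 0 < lam, 0 < mu
        set ψc : A →ₗ[ℂ] ℂ := ω.comp ((TensorProduct.mk ℂ A B).flip (star c * c)) with hψc
        set ψd : A →ₗ[ℂ] ℂ := ω.comp ((TensorProduct.mk ℂ A B).flip (star d * d)) with hψd
        have ψc_apply : ∀ x : A, ψc x = ω (x ⊗ₜ[ℂ] (star c * c)) := fun x => rfl
        have ψd_apply : ∀ x : A, ψd x = ω (x ⊗ₜ[ℂ] (star d * d)) := fun x => rfl
        set φ₁ : A →ₗ[ℂ] ℂ := (lam⁻¹ : ℝ) • ψc with hφ₁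
        set φ₂ : A →ₗ[ℂ] ℂ := (mu⁻¹ : ℝ) • ψd with hφ₂
        have hφ₁mem : φ₁ ∈ {φ : A →ₗ[ℂ] ℂ | φ 1 = 1 ∧ ∀ x : A, ∃ r : ℝ, 0 ≤ r ∧ φ (star x * x) = r} := by
          constructor
          · rw [hφ₁, LinearMap.smul_apply, ψc_apply, hlam, Complex.real_smul]
            rw [← Complex.ofReal_mul, inv_mul_cancel₀ (ne_of_gt hlampos), Complex.ofReal_one]
          · intro x
            obtain ⟨r, hr, he⟩ := pos1 x c
            refine ⟨lam⁻¹ * r, by positivity, ?_⟩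
            rw [hφ₁, LinearMap.smul_apply, ψc_apply, he, Complex.real_smul]
            push_cast; ring
        have hφ₂mem : φ₂ ∈ {φ : A →ₗ[ℂ] ℂ | φ 1 = 1 ∧ ∀ x : A, ∃ r : ℝ, 0 ≤ r ∧ φ (star x * x) = r} := by
          constructor
          · rw [hφ₂, LinearMap.smul_apply, ψd_apply, hmu, Complex.real_smul]
            rw [← Complex.ofReal_mul, inv_mul_cancel₀ (ne_of_gt hmupos), Complex.ofReal_one]
          · intro x
            obtain ⟨r, hr, he⟩ := pos1 x d
            refine ⟨mu⁻¹ * r, by positivity, ?_⟩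
            rw [hφ₂, LinearMap.smul_apply, ψd_apply, he, Complex.real_smul]
            push_cast; ring
        have hseg : (ω.comp ((TensorProduct.mk ℂ A B).flip 1)) ∈ openSegment ℝ φ₁ φ₂ := by
          refine ⟨lam, mu, hlampos, hmupos, hsum, ?_⟩
          ext x
          simp only [hφ₁, hφ₂, LinearMap.add_apply, LinearMap.smul_apply, LinearMap.coe_comp,
            Function.comp_apply, LinearMap.flip_apply, TensorProduct.mk_apply, ψc_apply, ψd_apply]
          rw [smul_smul, smul_smul, mul_inv_cancel₀ (ne_of_gt hlampos),
            mul_inv_cancel₀ (ne_of_gt hmupos), one_smul, one_smul]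
          rw [← map_add, ← TensorProduct.tmul_add, hcd]
        have hext := hpure.2 hφ₁mem hφ₂mem hseg
        have heqa : φ₁ a = ω (a ⊗ₜ[ℂ] (1:B)) := by
          rw [hext]
          simp [LinearMap.flip_apply]
        rw [hφ₁, LinearMap.smul_apply, ψc_apply, Complex.real_smul] at heqa
        have : ω (a ⊗ₜ[ℂ] (star c * c)) = (lam : ℂ) * ω (a ⊗ₜ[ℂ] (1:B)) := by
          have hne : (lam : ℂ) ≠ 0 := by exact_mod_cast ne_of_gt hlampos
          rw [← heqa, ← mul_assoc, ← Complex.ofReal_mul, mul_inv_cancel₀ (ne_of_gt hlampos),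
            Complex.ofReal_one, one_mul]
        rw [this, hlam]; ring
  letI : CStarAlgebra B := { }
  letI := CStarAlgebra.spectralOrder B
  haveI := CStarAlgebra.spectralOrderedRing B
  intro a b
  have halg : ∀ t : ℝ, 0 ≤ t → (0:B) ≤ algebraMap ℝ B t := by
    intro t ht
    have he : algebraMap ℝ B t
        = star (algebraMap ℝ B (Real.sqrt t)) * algebraMap ℝ B (Real.sqrt t) := by
      rw [(IsSelfAdjoint.algebraMap B (IsSelfAdjoint.all _)).star_eq, ← map_mul,
        Real.mul_self_sqrt ht]
    rw [he]
    exact star_mul_self_nonneg _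
  -- step 1: for 0 ≤ b' ≤ 1
  have key' : ∀ x : A, ∀ b' : B, 0 ≤ b' → b' ≤ 1 →
      ω (x ⊗ₜ[ℂ] b') = ω (x ⊗ₜ[ℂ] 1) * ω ((1:A) ⊗ₜ[ℂ] b') := by
    intro x b' h0 h1
    have hc : star (CFC.sqrt b') * CFC.sqrt b' = b' := by
      rw [(IsSelfAdjoint.of_nonneg (CFC.sqrt_nonneg _)).star_eq]
      exact CFC.sqrt_mul_sqrt_self b' h0
    have hd : star (CFC.sqrt (1 - b')) * CFC.sqrt (1 - b') = 1 - b' := by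
      rw [(IsSelfAdjoint.of_nonneg (CFC.sqrt_nonneg _)).star_eq]
      exact CFC.sqrt_mul_sqrt_self _ (sub_nonneg.mpr h1)
    have := key x (CFC.sqrt b') (CFC.sqrt (1 - b')) (by rw [hc, hd]; abel)
    rwa [hc] at this
  -- step 2: for 0 ≤ b'
  have keyNonneg : ∀ x : A, ∀ b' : B, 0 ≤ b' →
      ω (x ⊗ₜ[ℂ] b') = ω (x ⊗ₜ[ℂ] 1) * ω ((1:A) ⊗ₜ[ℂ] b') := by
    intro x b' h0
    set m : ℝ := ‖b'‖ + 1 with hm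
    have hmpos : (0:ℝ) < m := by positivity
    set c : B := (Real.sqrt m⁻¹ : ℝ) • CFC.sqrt b' with hcdef
    have hsc : star c * c = m⁻¹ • b' := by
      rw [hcdef, star_smul, star_trivial, smul_mul_smul_comm,
        (IsSelfAdjoint.of_nonneg (CFC.sqrt_nonneg _)).star_eq, CFC.sqrt_mul_sqrt_self b' h0,
        ← Real.sqrt_mul_self (by positivity : (0:ℝ) ≤ m⁻¹)]
      norm_num [Real.mul_self_sqrt (by positivity : (0:ℝ) ≤ m⁻¹)]
    have hb''0 : (0:B) ≤ m⁻¹ • b' := by rw [← hsc]; exact star_mul_self_nonneg c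
    have hb''1 : (m⁻¹ : ℝ) • b' ≤ 1 := by
      calc (m⁻¹ : ℝ) • b' ≤ algebraMap ℝ B ‖(m⁻¹ : ℝ) • b'‖ :=
            (IsSelfAdjoint.of_nonneg hb''0).le_algebraMap_norm_self
        _ ≤ 1 := by
            have hn : ‖(m⁻¹ : ℝ) • b'‖ ≤ 1 := by
              rw [norm_smul]
              simp only [norm_inv, Real.norm_eq_abs, abs_of_pos hmpos]
              rw [inv_mul_le_iff₀ hmpos, mul_one, hm]
              linarith
            have h0' := halg _ (sub_nonneg.mpr hn)
            rw [map_sub, map_one] at h0'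
            exact sub_nonneg.mp h0'
    have he := key' x _ hb''0 hb''1
    have hsmul1 : ∀ y : A, y ⊗ₜ[ℂ] ((m⁻¹ : ℝ) • b') = (m⁻¹ : ℝ) • (y ⊗ₜ[ℂ] b') :=
      fun y => TensorProduct.tmul_smul _ _ _
    have hωsmul : ∀ z : A ⊗[ℂ] B, ω ((m⁻¹ : ℝ) • z) = (m⁻¹ : ℝ) • ω z :=
      fun z => ω.map_smul_of_tower _ _
    rw [hsmul1, hsmul1, hωsmul, hωsmul, Complex.real_smul, Complex.real_smul] at he
    have hne : ((m⁻¹ : ℝ) : ℂ) ≠ 0 := by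
      simp only [ne_eq, Complex.ofReal_eq_zero]
      positivity
    apply mul_left_cancel₀ hne
    linear_combination he
  -- step 3: selfadjoint
  have keySelf : ∀ x : A, ∀ s : B, IsSelfAdjoint s →
      ω (x ⊗ₜ[ℂ] s) = ω (x ⊗ₜ[ℂ] 1) * ω ((1:A) ⊗ₜ[ℂ] s) := by
    intro x s hs
    have h1 : (0:B) ≤ algebraMap ℝ B ‖s‖ + s := by
      have := hs.neg_algebraMap_norm_le_self
      rwa [neg_le_iff_add_nonneg, add_comm] at this
    have h2 : (0:B) ≤ algebraMap ℝ B ‖s‖ := halg _ (norm_nonneg s)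
    have e1 := keyNonneg x _ h1
    have e2 := keyNonneg x _ h2
    have e1' := keyNonneg 1 _ h1
    have e2' := keyNonneg 1 _ h2
    have hdec : ∀ y : A, y ⊗ₜ[ℂ] s = y ⊗ₜ[ℂ] (algebraMap ℝ B ‖s‖ + s) - y ⊗ₜ[ℂ] (algebraMap ℝ B ‖s‖) := by
      intro y
      rw [← TensorProduct.tmul_sub]
      congr 1
      abel
    rw [hdec x, hdec 1, map_sub, map_sub, e1, e2]
    ring
  -- step 4: general b
  obtain ⟨b₁, b₂, hs₁, hs₂, hbdec⟩ :
      ∃ b₁ b₂ : B, IsSelfAdjoint b₁ ∧ IsSelfAdjoint b₂ ∧ b = b₁ + Complex.I • b₂ := by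
    refine ⟨(2⁻¹ : ℂ) • (b + star b), (2⁻¹ : ℂ) • ((-Complex.I) • (b - star b)), ?_, ?_, ?_⟩
    · rw [IsSelfAdjoint, star_smul, star_add, star_star]
      simp [add_comm]
    · rw [IsSelfAdjoint, star_smul, star_smul, star_sub, star_star]
      simp only [RCLike.star_def, map_inv₀, map_ofNat, map_neg, Complex.conj_I, neg_neg]
      module
    · rw [smul_comm (2⁻¹ : ℂ), smul_smul]
      have hI : Complex.I * -Complex.I = 1 := by
        linear_combination -Complex.I_mul_I
      rw [hI, one_smul]
      module
  have e₁ := keySelf a b₁ hs₁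
  have e₂ := keySelf a b₂ hs₂
  calc ω (a ⊗ₜ[ℂ] b) = ω (a ⊗ₜ[ℂ] b₁) + Complex.I * ω (a ⊗ₜ[ℂ] b₂) := by
        conv_lhs => rw [hbdec]
        rw [TensorProduct.tmul_add, TensorProduct.tmul_smul, map_add, map_smul, smul_eq_mul]
    _ = ω (a ⊗ₜ[ℂ] 1) * (ω ((1:A) ⊗ₜ[ℂ] b₁) + Complex.I * ω ((1:A) ⊗ₜ[ℂ] b₂)) := by
        rw [e₁, e₂]; ring
    _ = ω (a ⊗ₜ[ℂ] 1) * ω ((1:A) ⊗ₜ[ℂ] b) := by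
        congr 1
        conv_rhs => rw [hbdec]
        rw [TensorProduct.tmul_add, TensorProduct.tmul_smul, map_add, map_smul, smul_eq_mul]
end

section
/- Let ρ = Σ_{i=1}^k A_i ⊗ B_i be a nonzero matrix, where A_i are positive semidefinite m×m complex matrices, B_i are positive semidefinite n×n complex matrices, and ⊗ denotes the Kronecker product. Then the range of ρ contains a nonzero product vector: there exist nonzero vectors x ∈ ℂ^m and y ∈ ℂ^n such that the Kronecker product vector x ⊗ y lies in the range of ρ. (Consequently, a state whose density matrix is supported on a subspace containing no nonzero product vectors — e.g., one arising from an unextendible product basis — cannot be separable.) -/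
open scoped Kronecker ComplexOrder

open Matrix

private lemma aux_conjTranspose_kron {m n p q : Type*} (A : Matrix m n ℂ) (B : Matrix p q ℂ) :
    (A ⊗ₖ B)ᴴ = Aᴴ ⊗ₖ Bᴴ := by
  ext i j
  simp [conjTranspose_apply, kroneckerMap_apply, mul_comm]

private lemma aux_posSemidef_kron {m n : Type*} [Fintype m] [Fintype n] [DecidableEq m]
    [DecidableEq n] {A : Matrix m m ℂ} {B : Matrix n n ℂ}
    (hA : A.PosSemidef) (hB : B.PosSemidef) : (A ⊗ₖ B).PosSemidef := by
  exact hA.kronecker hB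

private lemma aux_range_eq_ker_orthogonal {ι : Type*} [Fintype ι]
    {T : EuclideanSpace ℂ ι →ₗ[ℂ] EuclideanSpace ℂ ι} (hT : T.IsSymmetric) :
    LinearMap.range T = (LinearMap.ker T)ᗮ := by
  have h : LinearMap.ker T = (LinearMap.range T)ᗮ := by
    ext x
    simp only [LinearMap.mem_ker, Submodule.mem_orthogonal]
    constructor
    · rintro hx u ⟨y, rfl⟩
      rw [hT y x, hx, inner_zero_right]
    · intro h
      have h2 : (inner ℂ (T x) (T x) : ℂ) = 0 :=
        (hT (T x) x).symm.trans (h (T (T x)) ⟨T x, rfl⟩)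
      exact inner_self_eq_zero.mp h2
  rw [h, Submodule.orthogonal_orthogonal]

private lemma aux_sum_mulVec {ι κ μ : Type*} [Fintype ι] [Fintype κ] [Fintype μ]
    (M : ι → Matrix κ μ ℂ) (v : μ → ℂ) : (∑ i, M i) *ᵥ v = ∑ i, M i *ᵥ v := by
  ext j
  simp only [mulVec, dotProduct, Matrix.sum_apply, Finset.sum_apply, Finset.sum_mul]
  exact Finset.sum_comm

private lemma aux_dot_sum {ι κ : Type*} [Fintype ι] [Fintype κ] (u : κ → ℂ)
    (f : ι → κ → ℂ) : u ⬝ᵥ (∑ i, f i) = ∑ i, u ⬝ᵥ f i := by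
  simp only [dotProduct, Finset.sum_apply, Finset.mul_sum]
  exact Finset.sum_comm

private lemma aux_kron_mulVec_prod {m n : ℕ} (A : Matrix (Fin m) (Fin m) ℂ)
    (B : Matrix (Fin n) (Fin n) ℂ) (u : Fin m → ℂ) (w : Fin n → ℂ) :
    (A ⊗ₖ B) *ᵥ (fun p : Fin m × Fin n => u p.1 * w p.2) =
      fun p : Fin m × Fin n => (A *ᵥ u) p.1 * (B *ᵥ w) p.2 := by
  funext p
  simp only [mulVec, dotProduct, kroneckerMap_apply, Finset.sum_mul_sum]
  rw [← Finset.sum_product']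
  refine Finset.sum_congr rfl fun q _ => ?_
  ring

/-- If `ρ = Σ_{i} A_i ⊗ B_i` is a nonzero matrix, where the `A_i` are
positive semidefinite `m×m` complex matrices and the `B_i` are positive semidefinite
`n×n` complex matrices (`⊗` the Kronecker product), then the range of `ρ` contains a
nonzero product vector `x ⊗ y` with `x ∈ ℂ^m`, `y ∈ ℂ^n` both nonzero. -/
theorem range_of_sum_kronecker_posSemidef_contains_product_vector
    (m n k : ℕ)
    (A : Fin k → Matrix (Fin m) (Fin m) ℂ) (B : Fin k → Matrix (Fin n) (Fin n) ℂ)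
    (hA : ∀ i, (A i).PosSemidef) (hB : ∀ i, (B i).PosSemidef)
    (hρ : (∑ i, A i ⊗ₖ B i) ≠ 0) :
    ∃ (x : Fin m → ℂ) (y : Fin n → ℂ), x ≠ 0 ∧ y ≠ 0 ∧
      ∃ v : Fin m × Fin n → ℂ,
        (∑ i, A i ⊗ₖ B i).mulVec v = fun p : Fin m × Fin n => x p.1 * y p.2 := by
  classical
  set ρ : Matrix (Fin m × Fin n) (Fin m × Fin n) ℂ := ∑ i, A i ⊗ₖ B i with hρdef
  -- each summand is PSD
  have hM : ∀ i, (A i ⊗ₖ B i).PosSemidef := fun i => aux_posSemidef_kron (hA i) (hB i)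
  -- ρ is PSD
  have hρPSD : ρ.PosSemidef := by
    refine posSemidef_iff_dotProduct_mulVec.mpr ⟨?_, ?_⟩
    · show ρᴴ = ρ
      rw [hρdef, conjTranspose_sum]
      exact Finset.sum_congr rfl fun i _ => (hM i).1
    · intro v
      rw [hρdef, aux_sum_mulVec, aux_dot_sum]
      exact Finset.sum_nonneg fun i _ => (hM i).dotProduct_mulVec_nonneg v
  -- find a nonzero summand
  obtain ⟨i, hi⟩ : ∃ i, A i ⊗ₖ B i ≠ 0 := by
    by_contra h
    push_neg at h
    exact hρ (Finset.sum_eq_zero fun i _ => h i)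
  have hAi : A i ≠ 0 := fun h => hi (by rw [h, zero_kronecker])
  have hBi : B i ≠ 0 := fun h => hi (by rw [h, kronecker_zero])
  -- find u, w with (A i) *ᵥ u ≠ 0 and (B i) *ᵥ w ≠ 0
  obtain ⟨u, hu⟩ : ∃ u, A i *ᵥ u ≠ 0 := by
    by_contra h
    push_neg at h
    apply hAi
    ext r c
    have := congrFun (h (Pi.single c 1)) r
    simpa using this
  obtain ⟨w, hw⟩ : ∃ w, B i *ᵥ w ≠ 0 := by
    by_contra h
    push_neg at h
    apply hBi
    ext r c
    have := congrFun (h (Pi.single c 1)) r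
    simpa using this
  refine ⟨A i *ᵥ u, B i *ᵥ w, hu, hw, ?_⟩
  -- kernel inclusion : ker ρ ≤ ker (A i ⊗ₖ B i)
  have hker : ∀ v : Fin m × Fin n → ℂ, ρ *ᵥ v = 0 → (A i ⊗ₖ B i) *ᵥ v = 0 := by
    intro v hv
    have h0 : ∑ j, star v ⬝ᵥ (A j ⊗ₖ B j) *ᵥ v = 0 := by
      rw [← aux_dot_sum, ← aux_sum_mulVec, ← hρdef, hv, dotProduct_zero]
    have hterm : star v ⬝ᵥ (A i ⊗ₖ B i) *ᵥ v = 0 :=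
      (Finset.sum_eq_zero_iff_of_nonneg (fun j _ => (hM j).dotProduct_mulVec_nonneg v)).mp h0 i (Finset.mem_univ i)
    exact ((hM i).dotProduct_mulVec_zero_iff v).mp hterm
  -- pass to Euclidean linear maps
  set T := Matrix.toEuclideanLin ρ with hT
  set S := Matrix.toEuclideanLin (A i ⊗ₖ B i) with hS
  have hTsymm : T.IsSymmetric := Matrix.isHermitian_iff_isSymmetric.mp hρPSD.1
  have hSsymm : S.IsSymmetric := Matrix.isHermitian_iff_isSymmetric.mp (hM i).1
  have hkerle : LinearMap.ker T ≤ LinearMap.ker S := by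
    intro v hv
    have hv' : ρ *ᵥ (WithLp.equiv 2 _ v) = 0 := congrArg WithLp.ofLp (LinearMap.mem_ker.mp hv)
    exact LinearMap.mem_ker.mpr (congrArg (WithLp.toLp 2) (hker _ hv'))
  have hrange : LinearMap.range S ≤ LinearMap.range T := by
    rw [aux_range_eq_ker_orthogonal hTsymm, aux_range_eq_ker_orthogonal hSsymm]
    exact Submodule.orthogonal_le hkerle
  -- the product vector is in the range of S, hence of T
  have hmem : ((WithLp.equiv 2 _).symm
      (fun p : Fin m × Fin n => (A i *ᵥ u) p.1 * (B i *ᵥ w) p.2) :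
        EuclideanSpace ℂ (Fin m × Fin n)) ∈ LinearMap.range S := by
    refine ⟨(WithLp.equiv 2 _).symm (fun p : Fin m × Fin n => u p.1 * w p.2), ?_⟩
    show (WithLp.equiv 2 _).symm ((A i ⊗ₖ B i) *ᵥ (fun p : Fin m × Fin n => u p.1 * w p.2)) = _
    rw [aux_kron_mulVec_prod]
  obtain ⟨v, hv⟩ := hrange hmem
  refine ⟨WithLp.equiv 2 _ v, ?_⟩
  have : (WithLp.equiv 2 _).symm (ρ *ᵥ (WithLp.equiv 2 _ v)) =
      (WithLp.equiv 2 _).symm (fun p : Fin m × Fin n => (A i *ᵥ u) p.1 * (B i *ᵥ w) p.2) := hv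
  exact (WithLp.equiv 2 _).symm.injective.eq_iff.mp this
end
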